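/- arXiv:0807.4463 — 3 statements merged into one kernel-verified Lean document; each statement's English description precedes it below -/
import Mathlib

section
/- For every integer q ≥ 3, with k_q = q − 3/2 + h_q/2 (where h_q is the q-th harmonic number) and k_{q−1} = (q−1) − 3/2 + h_{q−1}/2, the inequality 1 − 2/(k_q + √((k_q−1)(k_q+1))) > k_{q−1}/(k_{q−1}+1) holds. -/
/-- The `q`-th harmonic number `1 + 1/2 + ⋯ + 1/q`. -/
noncomputable def harmonicNum (q : ℕ) : ℝ := ∑ i ∈ Finset.range q, (1 : ℝ) / (i + 1)

/-- `k_q = q - 3/2 + h_q/2`. -/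
noncomputable def kq (q : ℕ) : ℝ := (q : ℝ) - 3/2 + harmonicNum q / 2

lemma harmonicNum_ge_one (q : ℕ) (hq : 1 ≤ q) : 1 ≤ harmonicNum q := by
  have h0 : (0 : ℕ) ∈ Finset.range q := Finset.mem_range.mpr hq
  have := Finset.single_le_sum (f := fun i : ℕ => (1 : ℝ) / (i + 1))
    (fun i _ => by positivity) h0
  simpa [harmonicNum] using this

/-- For `q ≥ 3`,
`1 - 2/(k_q + √((k_q-1)(k_q+1))) > k_{q-1}/(k_{q-1}+1)`. -/
theorem stmt_2 (q : ℕ) (hq : 3 ≤ q) :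
    1 - 2 / (kq q + Real.sqrt ((kq q - 1) * (kq q + 1))) >
      kq (q - 1) / (kq (q - 1) + 1) := by
  obtain ⟨p, rfl⟩ := Nat.exists_eq_add_of_le hq
  have hqm : 3 + p - 1 = p + 2 := by omega
  rw [hqm]
  have hh : 1 ≤ harmonicNum (p + 2) := harmonicNum_ge_one _ (by omega)
  set h := harmonicNum (p + 2) with hhdef
  have hQpos : (0 : ℝ) < (p : ℝ) + 3 := by positivity
  set Q : ℝ := (p : ℝ) + 3 with hQdef
  have hQ3 : (3 : ℝ) ≤ Q := by
    have : (0:ℝ) ≤ (p:ℝ) := Nat.cast_nonneg p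
    rw [hQdef]; linarith
  have hrec : harmonicNum (3 + p) = h + 1 / Q := by
    have : (3 : ℕ) + p = (p + 2) + 1 := by omega
    rw [this, harmonicNum, Finset.sum_range_succ, ← harmonicNum]
    push_cast [hQdef]
    ring
  have hA : kq (3 + p) = Q - 3/2 + (h + 1/Q) / 2 := by
    rw [kq, hrec]
    push_cast [hQdef]
    ring
  have hB : kq (p + 2) = Q - 5/2 + h / 2 := by
    rw [kq]
    push_cast [hQdef]
    ring
  set A := kq (3 + p) with hAdef
  set B := kq (p + 2) with hBdef
  clear_value A B
  clear_value h Q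
  clear hrec hAdef hBdef hhdef hQdef
  have hB1 : B + 1 = A - 1 / (2 * Q) := by
    rw [hA, hB]; field_simp; ring
  have hB1pos : 0 < B + 1 := by
    rw [hB]
    have : 1 / Q ≤ 1 := by
      rw [div_le_one hQpos]; linarith
    nlinarith
  have hA1 : 1 < A := by
    rw [hA]
    have : 0 < 1 / Q := by positivity
    nlinarith
  -- key: sqrt(A^2-1) > A - 1/Q
  have hkey : A - 1 / Q < Real.sqrt ((A - 1) * (A + 1)) := by
    have hnn : 0 ≤ A - 1 / Q := by
      have : 1 / Q ≤ 1 := by rw [div_le_one hQpos]; linarith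
      linarith
    rw [show (A - 1) * (A + 1) = A ^ 2 - 1 by ring]
    rw [← Real.sqrt_sq hnn]
    apply Real.sqrt_lt_sqrt (by positivity)
    have hQne : Q ≠ 0 := ne_of_gt hQpos
    have hexp : (A - 1 / Q) ^ 2 = A ^ 2 - 2 * A / Q + 1 / Q ^ 2 := by
      field_simp; ring
    have hAQ : A * Q = Q ^ 2 - 3 / 2 * Q + h * Q / 2 + 1 / 2 := by
      rw [hA]; field_simp; ring
    have h2 : Q ^ 2 + 1 < 2 * A * Q := by
      nlinarith [mul_nonneg hQpos.le (by linarith : (0:ℝ) ≤ Q - 3),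
        mul_nonneg hQpos.le (by linarith : (0:ℝ) ≤ h - 1)]
    have hsq : (A - 1 / Q) ^ 2 = (A * Q - 1) ^ 2 / Q ^ 2 := by
      field_simp
    rw [hsq, div_lt_iff₀ (by positivity : (0:ℝ) < Q ^ 2)]
    nlinarith
  set s := Real.sqrt ((A - 1) * (A + 1)) with hsdef
  have hspos : 0 ≤ s := Real.sqrt_nonneg _
  clear_value s
  have hApos : 0 < A + s := by linarith
  have hBdiv : B / (B + 1) = 1 - 1 / (B + 1) := by
    field_simp; ring
  rw [hBdiv, gt_iff_lt, sub_lt_sub_iff_left]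
  rw [div_lt_div_iff₀ hApos hB1pos]
  have hQinv : 0 < 1 / (2 * Q) := by positivity
  have : 1 / (2 * Q) < 1 / Q := by
    apply div_lt_div_of_pos_left one_pos hQpos
    linarith
  linarith [hB1, hkey]
end

section
/- For every integer q ≥ 3 and k_q = q − 3/2 + h_q/2, the inequality k_q + k_q·√(1 − 1/k_q²) > 2(k_{q−1} + 1) holds. -/
lemma harmonicNum_ge (q : ℕ) (hq : 3 ≤ q) : (11:ℝ)/6 ≤ harmonicNum q := by
  have h3 : harmonicNum 3 = 11/6 := by
    norm_num [harmonicNum, Finset.sum_range_succ]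
  rw [← h3]
  apply Finset.sum_le_sum_of_subset_of_nonneg (Finset.range_subset_range.mpr hq)
  intro i _ _; positivity

lemma harmonicNum_succ (q : ℕ) : harmonicNum (q+1) = harmonicNum q + 1/(q+1) := by
  simp [harmonicNum, Finset.sum_range_succ]

/-- For `q ≥ 3`, `k_q + k_q·√(1 - 1/k_q²) > 2(k_{q-1} + 1)`. -/
theorem stmt_3 (q : ℕ) (hq : 3 ≤ q) :
    kq q + kq q * Real.sqrt (1 - 1 / (kq q) ^ 2) > 2 * (kq (q - 1) + 1) := by
  obtain ⟨n, rfl⟩ : ∃ n, q = n + 1 := ⟨q - 1, by omega⟩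
  have hn : (2:ℝ) ≤ (n:ℝ) := by
    have : 2 ≤ n := by omega
    exact_mod_cast this
  have hH := harmonicNum_ge (n+1) hq
  set k := kq (n+1) with hkdef
  have hkval : k = (n:ℝ) + 1 - 3/2 + harmonicNum (n+1) / 2 := by
    simp only [hkdef, kq]; push_cast; ring
  have hk2 : (2:ℝ) ≤ k := by rw [hkval]; linarith
  have hk0 : (0:ℝ) < k := by linarith
  have hrel : kq (n + 1 - 1) = k - 1 - 1/(2*((n:ℝ)+1)) := by
    simp only [Nat.add_sub_cancel, kq, hkval, harmonicNum_succ]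
    field_simp; ring
  rw [hrel]
  have hx : (0:ℝ) ≤ k - 1/((n:ℝ)+1) := by
    have : 1/((n:ℝ)+1) ≤ 1 := by
      rw [div_le_one (by linarith)]; linarith
    linarith
  have hsq : k * Real.sqrt (1 - 1/k^2) = Real.sqrt (k^2 - 1) := by
    have h1 : k^2 - 1 = k^2 * (1 - 1/k^2) := by
      field_simp
    rw [h1, Real.sqrt_mul (sq_nonneg k), Real.sqrt_sq hk0.le]
  rw [hsq]
  have h2k : (n:ℝ) + 1 + 1/((n:ℝ)+1) < 2*k := by
    have h1 : 1/((n:ℝ)+1) ≤ 1 := by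
      rw [div_le_one (by linarith)]; linarith
    rw [hkval]; linarith
  have hlt : k - 1/((n:ℝ)+1) < Real.sqrt (k^2 - 1) := by
    rw [Real.lt_sqrt hx]
    have hu : ((n:ℝ)+1) * (1/((n:ℝ)+1)) = 1 := by field_simp
    nlinarith [mul_lt_mul_of_pos_right h2k (show (0:ℝ) < 1/((n:ℝ)+1) by positivity), hu]
  have huu : (1:ℝ)/(2*((n:ℝ)+1)) = (1/((n:ℝ)+1))/2 := by
    rw [one_div, mul_inv]; ring
  linarith
end

section
/- Let (A, B) be an ε-regular pair with density d, with 0 < ε < 1/3. Then there exist A′ ⊆ A and B′ ⊆ B with |A′| ≥ (1 − 2ε)|A| and |B′| ≥ (1 − 2ε)|B| such that every vertex of A′ has at least (d − 3ε)|B′| neighbors in B′ and every vertex of B′ has at least (d − 3ε)|A′| neighbors in A′, and (A′, B′) is 3ε-regular. -/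
open Finset

variable {V : Type*} [DecidableEq V]

/-- Number of edges of `G` between the disjoint sets `X` and `Y`. -/
def edgesBetween (G : SimpleGraph V) [DecidableRel G.Adj] (X Y : Finset V) : ℕ :=
  ∑ x ∈ X, (Y.filter (G.Adj x)).card

/-- Density `d(X,Y) = e(X,Y)/(|X||Y|)` between disjoint sets `X` and `Y`. -/
noncomputable def density (G : SimpleGraph V) [DecidableRel G.Adj] (X Y : Finset V) : ℝ :=
  (edgesBetween G X Y : ℝ) / ((X.card : ℝ) * (Y.card : ℝ))

/-- `(A,B)` is an `ε`-regular pair: every `X ⊆ A`, `Y ⊆ B` with `|X| > ε|A|`,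
`|Y| > ε|B|` satisfies `|d(X,Y) - d(A,B)| < ε`. -/
def IsRegularPair (G : SimpleGraph V) [DecidableRel G.Adj] (ε : ℝ) (A B : Finset V) : Prop :=
  ∀ X ⊆ A, ∀ Y ⊆ B, ε * A.card < X.card → ε * B.card < Y.card →
    |density G X Y - density G A B| < ε

lemma edgesBetween_comm (G : SimpleGraph V) [DecidableRel G.Adj] (X Y : Finset V) :
    edgesBetween G X Y = edgesBetween G Y X := by
  unfold edgesBetween
  simp_rw [card_filter]
  rw [Finset.sum_comm]
  refine Finset.sum_congr rfl fun y _ => Finset.sum_congr rfl fun x _ => ?_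
  simp [G.adj_comm]

lemma density_comm (G : SimpleGraph V) [DecidableRel G.Adj] (X Y : Finset V) :
    density G X Y = density G Y X := by
  unfold density
  rw [edgesBetween_comm, mul_comm]

lemma IsRegularPair.symm {G : SimpleGraph V} [DecidableRel G.Adj] {ε : ℝ} {A B : Finset V}
    (h : IsRegularPair G ε A B) : IsRegularPair G ε B A := by
  intro Y hY X hX h1 h2
  rw [density_comm G Y X, density_comm G B A]
  exact h X hX Y hY h2 h1

lemma bad_small (G : SimpleGraph V) [DecidableRel G.Adj] {ε : ℝ} (hε : 0 < ε) (hε1 : ε < 1)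
    (A B : Finset V) (hreg : IsRegularPair G ε A B) (hB : 0 < B.card)
    [DecidablePred fun a => ((B.filter (G.Adj a)).card : ℝ) < (density G A B - ε) * B.card] :
    (((A.filter fun a => ((B.filter (G.Adj a)).card : ℝ) < (density G A B - ε) * B.card).card : ℝ))
      ≤ ε * A.card := by
  by_contra hcon
  push_neg at hcon
  set X := A.filter fun a => ((B.filter (G.Adj a)).card : ℝ) < (density G A B - ε) * B.card
    with hXdef
  have hXA : X ⊆ A := filter_subset _ _
  have hBcast : (0 : ℝ) < B.card := by exact_mod_cast hB
  have hX0 : (0 : ℝ) < X.card := by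
    have : (0 : ℝ) ≤ ε * A.card := by positivity
    linarith
  have hXne : X.Nonempty := card_pos.mp (by exact_mod_cast hX0)
  have hr := hreg X hXA B subset_rfl hcon (by nlinarith)
  have hsum : (edgesBetween G X B : ℝ) < X.card * ((density G A B - ε) * B.card) := by
    have h1 : (edgesBetween G X B : ℝ) = ∑ x ∈ X, ((B.filter (G.Adj x)).card : ℝ) := by
      unfold edgesBetween; push_cast; rfl
    rw [h1]
    calc ∑ x ∈ X, ((B.filter (G.Adj x)).card : ℝ)
        < ∑ _x ∈ X, (density G A B - ε) * B.card :=
          Finset.sum_lt_sum_of_nonempty hXne (fun i hi => (mem_filter.mp hi).2)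
      _ = X.card * ((density G A B - ε) * B.card) := by
          rw [Finset.sum_const, nsmul_eq_mul]
  have hd : density G X B < density G A B - ε := by
    have hgoal : (edgesBetween G X B : ℝ) / ((X.card : ℝ) * B.card)
        < density G A B - ε := by
      rw [div_lt_iff₀ (by positivity)]
      calc (edgesBetween G X B : ℝ) < X.card * ((density G A B - ε) * B.card) := hsum
        _ = (density G A B - ε) * ((X.card : ℝ) * B.card) := by ring
    exact hgoal
  have := abs_lt.mp hr
  linarith

set_option maxHeartbeats 1000000 in
/-- Every `ε`-regular pair of density `d` contains a
`(3ε, d-3ε)`-super-regular subpair on at least `(1-2ε)`-proportions of each side. -/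
theorem stmt_10 (G : SimpleGraph V) [DecidableRel G.Adj] [Fintype V]
    (ε : ℝ) (hε : 0 < ε) (hε' : ε < 1/3) (A B : Finset V) (hdisj : Disjoint A B)
    (hreg : IsRegularPair G ε A B) :
    ∃ A' ⊆ A, ∃ B' ⊆ B,
      (1 - 2 * ε) * A.card ≤ (A'.card : ℝ) ∧
      (1 - 2 * ε) * B.card ≤ (B'.card : ℝ) ∧
      (∀ a ∈ A', (density G A B - 3 * ε) * B'.card ≤ ((B'.filter (G.Adj a)).card : ℝ)) ∧
      (∀ b ∈ B', (density G A B - 3 * ε) * A'.card ≤ ((A'.filter (G.Adj b)).card : ℝ)) ∧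
      IsRegularPair G (3 * ε) A' B' := by
  classical
  set d := density G A B with hd
  by_cases hA0 : A.card = 0
  · refine ⟨A, subset_rfl, B, subset_rfl, ?_, ?_, ?_, ?_, ?_⟩
    · simp [hA0]
    · nlinarith [Nat.cast_nonneg (α := ℝ) B.card, hε.le]
    · intro a ha
      exact absurd hA0 (card_pos.mpr ⟨a, ha⟩).ne'
    · intro b _
      have h0 : (0 : ℝ) ≤ ((A.filter (G.Adj b)).card : ℝ) := Nat.cast_nonneg _
      rw [hA0]
      simpa using h0
    · intro X hX Y hY h1 h2
      exfalso
      have hle : X.card ≤ A.card := card_le_card hX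
      have hX0 : X.card = 0 := by omega
      rw [hA0, hX0] at h1
      simp at h1
  by_cases hB0 : B.card = 0
  · refine ⟨A, subset_rfl, B, subset_rfl, ?_, ?_, ?_, ?_, ?_⟩
    · nlinarith [Nat.cast_nonneg (α := ℝ) A.card, hε.le]
    · simp [hB0]
    · intro a _
      have h0 : (0 : ℝ) ≤ ((B.filter (G.Adj a)).card : ℝ) := Nat.cast_nonneg _
      rw [hB0]
      simpa using h0
    · intro b hb
      exact absurd hB0 (card_pos.mpr ⟨b, hb⟩).ne'
    · intro X hX Y hY h1 h2
      exfalso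
      have hle : Y.card ≤ B.card := card_le_card hY
      have hY0 : Y.card = 0 := by omega
      rw [hB0, hY0] at h2
      simp at h2
  -- main case
  have hA : 0 < A.card := Nat.pos_of_ne_zero hA0
  have hB : 0 < B.card := Nat.pos_of_ne_zero hB0
  have hAc : (0 : ℝ) < A.card := by exact_mod_cast hA
  have hBc : (0 : ℝ) < B.card := by exact_mod_cast hB
  have hε1 : ε < 1 := by linarith
  set A' := A.filter fun a => (d - ε) * B.card ≤ ((B.filter (G.Adj a)).card : ℝ) with hA'def
  set B' := B.filter fun b => (d - ε) * A.card ≤ ((A.filter (G.Adj b)).card : ℝ) with hB'def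
  -- size bounds
  have hbadA := bad_small G hε hε1 A B hreg hB
  have hbadB := bad_small G hε hε1 B A hreg.symm hA
  rw [density_comm G B A, ← hd] at hbadB
  rw [← hd] at hbadA
  have hsplitA : A'.card
      + (A.filter fun a => ((B.filter (G.Adj a)).card : ℝ) < (d - ε) * B.card).card = A.card := by
    have key := card_filter_add_card_filter_not (s := A)
      (p := fun a => (d - ε) * (B.card : ℝ) ≤ ((B.filter (G.Adj a)).card : ℝ))
    have hfe : (A.filter fun a => ¬ ((d - ε) * (B.card : ℝ) ≤ ((B.filter (G.Adj a)).card : ℝ)))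
        = A.filter fun a => ((B.filter (G.Adj a)).card : ℝ) < (d - ε) * B.card := by
      apply filter_congr
      intro a _
      simp [not_le]
    rw [hfe] at key
    exact key
  have hsplitB : B'.card
      + (B.filter fun b => ((A.filter (G.Adj b)).card : ℝ) < (d - ε) * A.card).card = B.card := by
    have key := card_filter_add_card_filter_not (s := B)
      (p := fun b => (d - ε) * (A.card : ℝ) ≤ ((A.filter (G.Adj b)).card : ℝ))
    have hfe : (B.filter fun b => ¬ ((d - ε) * (A.card : ℝ) ≤ ((A.filter (G.Adj b)).card : ℝ)))
        = B.filter fun b => ((A.filter (G.Adj b)).card : ℝ) < (d - ε) * A.card := by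
      apply filter_congr
      intro b _
      simp [not_le]
    rw [hfe] at key
    exact key
  have hA'ge : (1 - ε) * A.card ≤ (A'.card : ℝ) := by
    have hc : ((A'.card : ℝ))
        + ((A.filter fun a => ((B.filter (G.Adj a)).card : ℝ) < (d - ε) * B.card).card : ℝ)
        = A.card := by exact_mod_cast hsplitA
    linarith
  have hB'ge : (1 - ε) * B.card ≤ (B'.card : ℝ) := by
    have hc : ((B'.card : ℝ))
        + ((B.filter fun b => ((A.filter (G.Adj b)).card : ℝ) < (d - ε) * A.card).card : ℝ)
        = B.card := by exact_mod_cast hsplitB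
    linarith
  have hA'sub : A' ⊆ A := filter_subset _ _
  have hB'sub : B' ⊆ B := filter_subset _ _
  have hA'le : (A'.card : ℝ) ≤ A.card := by exact_mod_cast card_le_card hA'sub
  have hB'le : (B'.card : ℝ) ≤ B.card := by exact_mod_cast card_le_card hB'sub
  -- degree transfer
  have hdegB' : ∀ a, ((B.filter (G.Adj a)).card : ℝ) - ((B.card : ℝ) - B'.card)
      ≤ ((B'.filter (G.Adj a)).card : ℝ) := by
    intro a
    have hsub : B.filter (G.Adj a) ⊆ B'.filter (G.Adj a) ∪ (B \ B') := by
      intro x hx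
      simp only [mem_filter, mem_union, mem_sdiff] at *
      tauto
    have hc : (B.filter (G.Adj a)).card ≤ (B'.filter (G.Adj a)).card + (B \ B').card :=
      (card_le_card hsub).trans (card_union_le _ _)
    have hsd : (B \ B').card = B.card - B'.card := card_sdiff_of_subset hB'sub
    rw [hsd] at hc
    have hle : B'.card ≤ B.card := card_le_card hB'sub
    have hcr : ((B.filter (G.Adj a)).card : ℝ)
        ≤ (B'.filter (G.Adj a)).card + ((B.card - B'.card : ℕ) : ℝ) := by exact_mod_cast hc
    rw [Nat.cast_sub hle] at hcr
    linarith
  have hdegA' : ∀ b, ((A.filter (G.Adj b)).card : ℝ) - ((A.card : ℝ) - A'.card)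
      ≤ ((A'.filter (G.Adj b)).card : ℝ) := by
    intro b
    have hsub : A.filter (G.Adj b) ⊆ A'.filter (G.Adj b) ∪ (A \ A') := by
      intro x hx
      simp only [mem_filter, mem_union, mem_sdiff] at *
      tauto
    have hc : (A.filter (G.Adj b)).card ≤ (A'.filter (G.Adj b)).card + (A \ A').card :=
      (card_le_card hsub).trans (card_union_le _ _)
    have hsd : (A \ A').card = A.card - A'.card := card_sdiff_of_subset hA'sub
    rw [hsd] at hc
    have hle : A'.card ≤ A.card := card_le_card hA'sub
    have hcr : ((A.filter (G.Adj b)).card : ℝ)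
        ≤ (A'.filter (G.Adj b)).card + ((A.card - A'.card : ℕ) : ℝ) := by exact_mod_cast hc
    rw [Nat.cast_sub hle] at hcr
    linarith
  have hcardA : (1 - 2 * ε) * A.card ≤ (A'.card : ℝ) := by nlinarith
  have hcardB : (1 - 2 * ε) * B.card ≤ (B'.card : ℝ) := by nlinarith
  have hdegcondA : ∀ a ∈ A', (d - 3 * ε) * B'.card ≤ ((B'.filter (G.Adj a)).card : ℝ) := by
    intro a ha
    have hdeg : (d - ε) * B.card ≤ ((B.filter (G.Adj a)).card : ℝ) := (mem_filter.mp ha).2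
    rcases le_or_gt (d - 3 * ε) 0 with h | h
    · have h1 : (d - 3 * ε) * B'.card ≤ 0 := mul_nonpos_of_nonpos_of_nonneg h (Nat.cast_nonneg _)
      have h0 : (0 : ℝ) ≤ ((B'.filter (G.Adj a)).card : ℝ) := Nat.cast_nonneg _
      linarith
    · have key := hdegB' a
      nlinarith [mul_nonneg (by linarith : (0:ℝ) ≤ d - 2 * ε)
        (by linarith : (0:ℝ) ≤ (B.card : ℝ) - B'.card),
        mul_nonneg hε.le (Nat.cast_nonneg (α := ℝ) B'.card)]
  have hdegcondB : ∀ b ∈ B', (d - 3 * ε) * A'.card ≤ ((A'.filter (G.Adj b)).card : ℝ) := by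
    intro b hb
    have hdeg : (d - ε) * A.card ≤ ((A.filter (G.Adj b)).card : ℝ) := (mem_filter.mp hb).2
    rcases le_or_gt (d - 3 * ε) 0 with h | h
    · have h1 : (d - 3 * ε) * A'.card ≤ 0 := mul_nonpos_of_nonpos_of_nonneg h (Nat.cast_nonneg _)
      have h0 : (0 : ℝ) ≤ ((A'.filter (G.Adj b)).card : ℝ) := Nat.cast_nonneg _
      linarith
    · have key := hdegA' b
      nlinarith [mul_nonneg (by linarith : (0:ℝ) ≤ d - 2 * ε)
        (by linarith : (0:ℝ) ≤ (A.card : ℝ) - A'.card),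
        mul_nonneg hε.le (Nat.cast_nonneg (α := ℝ) A'.card)]
  have hregpair : IsRegularPair G (3 * ε) A' B' := by
    intro X hX Y hY h1 h2
    have hXA : X ⊆ A := hX.trans hA'sub
    have hYB : Y ⊆ B := hY.trans hB'sub
    have hXcard : ε * A.card < X.card := by
      nlinarith [mul_nonneg (mul_nonneg hε.le hAc.le) (by linarith : (0:ℝ) ≤ 2 - 3 * ε),
        mul_le_mul_of_nonneg_left hA'ge (by linarith : (0:ℝ) ≤ 3 * ε)]
    have hYcard : ε * B.card < Y.card := by
      nlinarith [mul_nonneg (mul_nonneg hε.le hBc.le) (by linarith : (0:ℝ) ≤ 2 - 3 * ε),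
        mul_le_mul_of_nonneg_left hB'ge (by linarith : (0:ℝ) ≤ 3 * ε)]
    have h3 := hreg X hXA Y hYB hXcard hYcard
    have hA'c : ε * A.card < A'.card := by
      nlinarith [mul_pos hAc (show (0:ℝ) < 1 - 2 * ε by linarith)]
    have hB'c : ε * B.card < B'.card := by
      nlinarith [mul_pos hBc (show (0:ℝ) < 1 - 2 * ε by linarith)]
    have h4 := hreg A' hA'sub B' hB'sub hA'c hB'c
    have habs : |density G X Y - density G A' B'|
        ≤ |density G X Y - density G A B| + |density G A B - density G A' B'| :=
      abs_sub_le _ _ _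
    rw [abs_sub_comm (density G A B) (density G A' B')] at habs
    have h5 := abs_lt.mp h3
    have h6 := abs_lt.mp h4
    rw [← hd] at h5 h6
    calc |density G X Y - density G A' B'|
        ≤ |density G X Y - density G A B| + |density G A' B' - density G A B| := habs
      _ < 3 * ε := by rw [← hd]; linarith
  exact ⟨A', hA'sub, B', hB'sub, hcardA, hcardB, hdegcondA, hdegcondB, hregpair⟩
end
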